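/- arXiv:2402.13774 — 4 statements merged into one kernel-verified Lean document; each statement's English description precedes it below -/
import Mathlib

section
/- Let H be a connected Γ-graded algebra over a field k, let {z_ξ}_{ξ∈Ξ} be a family of homogeneous elements of H_+, and let ◁ be a total order on Ξ whose restriction to {ξ ∈ Ξ : deg(z_ξ) = γ} is well-founded for each γ ∈ Γ. Then the partial orders ◁_L and ◁_R on P(Ξ) are both well-founded. -/
open scoped TensorProduct
open Classical

noncomputable section

namespace AdamsPaper

variable {k : Type*} [Field k] {σ : Type*} {H : Type*}

/-- A connected `Γ`-graded algebra structure, `Γ = σ →₀ ℕ` a free abelian monoid. -/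
def IsConnGradedAlg [Nonempty σ] [DecidableEq σ] [Ring H] [Algebra k H]
    (𝒜 : (σ →₀ ℕ) → Submodule k H) : Prop :=
  DirectSum.IsInternal 𝒜 ∧ (1 : H) ∈ 𝒜 0 ∧
    (∀ α β : σ →₀ ℕ, ∀ x ∈ 𝒜 α, ∀ y ∈ 𝒜 β, x * y ∈ 𝒜 (α + β)) ∧
    Module.finrank k (𝒜 0) = 1

/-- A connected `Γ`-graded Hopf algebra: the grading is compatible with all structure maps. -/
def IsConnGradedHopf [Nonempty σ] [DecidableEq σ] [Ring H] [HopfAlgebra k H]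
    (𝒜 : (σ →₀ ℕ) → Submodule k H) : Prop :=
  IsConnGradedAlg (k := k) 𝒜 ∧
    (∀ γ : σ →₀ ℕ, ∀ x ∈ 𝒜 γ,
      Coalgebra.comul (R := k) x ∈
        ⨆ p : {p : (σ →₀ ℕ) × (σ →₀ ℕ) // p.1 + p.2 = γ},
          LinearMap.range (TensorProduct.mapIncl (𝒜 p.1.1) (𝒜 p.1.2))) ∧
    (∀ γ : σ →₀ ℕ, γ ≠ 0 → ∀ x ∈ 𝒜 γ, Coalgebra.counit (R := k) x = 0)

/-- Convolution product of linear endomorphisms of a bialgebra. -/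
def conv [Ring H] [Bialgebra k H] (f g : H →ₗ[k] H) : H →ₗ[k] H :=
  LinearMap.mul' k H ∘ₗ TensorProduct.map f g ∘ₗ Coalgebra.comul (R := k)

/-- The convolution unit `η ∘ ε`. -/
def convOne [Ring H] [Bialgebra k H] : H →ₗ[k] H :=
  Algebra.linearMap k H ∘ₗ Coalgebra.counit (R := k)

/-- Convolution powers. -/
def convPow [Ring H] [Bialgebra k H] (f : H →ₗ[k] H) : ℕ → (H →ₗ[k] H)
  | 0 => convOne
  | n + 1 => conv f (convPow f n)

/-- The Adams operators `Ψ_n`, `n ∈ ℤ`: convolution powers of the identity for `n ≥ 0`,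
convolution powers of the antipode for `n < 0`. -/
def adams [Ring H] [HopfAlgebra k H] (n : ℤ) : H →ₗ[k] H :=
  if 0 ≤ n then convPow (LinearMap.id : H →ₗ[k] H) n.toNat
  else convPow (HopfAlgebra.antipode (R := k) (A := H)) (-n).toNat

variable {Ξ : Type*}

/-- `z_V`, the ordered product of the family along a finite sequence `V`. -/
def zProd [Ring H] (z : Ξ → H) (V : List Ξ) : H := (V.map z).prod

/-- `|V|`, the degree of a finite sequence. -/
def degList (d : Ξ → σ →₀ ℕ) (V : List Ξ) : σ →₀ ℕ := (V.map d).sum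

/-- The number of occurrences of `ξ` in `V`. -/
def cnt (V : List Ξ) (ξ : Ξ) : ℕ := (V.map fun a => if a = ξ then 1 else 0).sum

/-- `V ∈ P(Ξ,◁,h)`: `V` is nondecreasing with respect to `◁` and each element occurs
fewer than `h ξ` times. -/
def Adm (lt : Ξ → Ξ → Prop) (h : Ξ → ℕ∞) (V : List Ξ) : Prop :=
  V.Chain' (fun a b => lt a b ∨ a = b) ∧ ∀ ξ : Ξ, (cnt V ξ : ℕ∞) < h ξ

/-- The subspace `H[ξ,◁,h]`: the span of the `z_V` with `V ∈ P(Ξ,◁,h)` whose last entry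
is `◁ ξ`. -/
def Hspan [Ring H] [Algebra k H] (z : Ξ → H) (lt : Ξ → Ξ → Prop) (h : Ξ → ℕ∞)
    (ξ : Ξ) : Submodule k H :=
  Submodule.span k {x : H | ∃ V : List Ξ, Adm lt h V ∧ (∀ ν ∈ V.getLast?, lt ν ξ) ∧
    x = zProd z V}

/-- `A_+`, the span of the components of nonzero degree of a (homogeneous) subspace `A`. -/
def posPart [Ring H] [Algebra k H] (𝒜 : (σ →₀ ℕ) → Submodule k H)
    (A : Submodule k H) : Submodule k H :=
  ⨆ γ : {γ : σ →₀ ℕ // γ ≠ 0}, A ⊓ 𝒜 γ.1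

/-- Comparison of two finite sequences of the same degree, reading from the left. -/
def ltFromLeft (lt : Ξ → Ξ → Prop) (U V : List Ξ) : Prop :=
  ∃ l : ℕ, 1 ≤ l ∧ l ≤ min U.length V.length ∧
    (∀ i : ℕ, i + 1 < l → U[i]? = V[i]?) ∧
    ∃ a b, U[l - 1]? = some a ∧ V[l - 1]? = some b ∧ lt a b

/-- The order `◁_L` on finite sequences. -/
def ltL (d : Ξ → σ →₀ ℕ) (lt : Ξ → Ξ → Prop) (U V : List Ξ) : Prop :=
  (∃ γ : σ →₀ ℕ, γ ≠ 0 ∧ degList d U + γ = degList d V) ∨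
    (degList d U = degList d V ∧ ltFromLeft lt U V)

/-- The order `◁_R` on finite sequences. -/
def ltR (d : Ξ → σ →₀ ℕ) (lt : Ξ → Ξ → Prop) (U V : List Ξ) : Prop :=
  (∃ γ : σ →₀ ℕ, γ ≠ 0 ∧ degList d U + γ = degList d V) ∨
    (degList d U = degList d V ∧ ltFromLeft lt U.reverse V.reverse)

end AdamsPaper

end

/-! A sequence of degree `γ` has length at most the total degree of `γ`, since every `d ξ` is
nonzero, and its entries lie in `{ξ | d ξ ≤ γ}`, a finite union of the well-founded fibres
`{ξ | d ξ = δ}`. Padded to a common length, such sequences are compared by `◁_L` as in the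
lexicographic order on a finite product of well-founded orders, and between different degrees
`◁_L` follows the well-founded order of `σ →₀ ℕ`. `◁_R` is `◁_L` on reversed sequences. -/

namespace AdamsPaper

section WellFoundedOn

variable {α ι : Type*} {r : α → α → Prop}

theorem wellFoundedOn_biUnion_of_finite [IsStrictOrder α r] {t : Set ι} (ht : t.Finite)
    {s : ι → Set α} (hs : ∀ i ∈ t, (s i).WellFoundedOn r) :
    (⋃ i ∈ t, s i).WellFoundedOn r := by
  induction t, ht using Set.Finite.induction_on with
  | empty => simp
  | @insert i t _ _ ih =>
    rw [Set.biUnion_insert]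
    exact (hs i (Set.mem_insert i t)).union (ih fun j hj => hs j (Set.mem_insert_of_mem i hj))

theorem wellFoundedOn_le_of_wellFoundedOn_eq [IsStrictOrder α r] {β : Type*} [Preorder β]
    [LocallyFiniteOrderBot β] {d : α → β} (hd : ∀ γ, {a | d a = γ}.WellFoundedOn r) (γ : β) :
    {a | d a ≤ γ}.WellFoundedOn r :=
  (wellFoundedOn_biUnion_of_finite (Set.finite_Iic γ) fun δ _ => hd δ).subset
    fun a ha => Set.mem_biUnion (x := d a) ha rfl

theorem wellFoundedOn_ltFromLeft {s : Set α} (hs : s.WellFoundedOn r) (N : ℕ) :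
    {V : List α | V.length ≤ N ∧ ∀ x ∈ V, x ∈ s}.WellFoundedOn (ltFromLeft r) := by
  rcases isEmpty_or_nonempty α with _ | ⟨⟨x₀⟩⟩
  · exact ⟨fun V => ⟨V, fun _ ⟨_, _, _, _, a, _⟩ => isEmptyElim a⟩⟩
  rw [Set.wellFoundedOn_iff] at hs ⊢
  -- the padding value is irrelevant: `ltFromLeft` only looks at positions both lists have
  refine Subrelation.wf ?_ ((Pi.Lex.wellFounded (· < ·) fun _ : Fin N => hs).onFun
    (f := fun V (i : Fin N) => V.getD i x₀))
  rintro U V ⟨⟨l, hl, hlmin, hpre, a, b, ha, hb, hab⟩, ⟨hUN, hUs⟩, -, hVs⟩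
  refine ⟨⟨l - 1, by omega⟩, fun j (hj : (j : ℕ) < l - 1) => ?_, ?_⟩
  · simp only [List.getD_eq_getElem?_getD, hpre j (by omega)]
  · simp only [List.getD_eq_getElem?_getD, ha, hb, Option.getD_some]
    exact ⟨hab, hUs a (List.mem_of_getElem? ha), hVs b (List.mem_of_getElem? hb)⟩

end WellFoundedOn

section DegList

variable {σ Ξ : Type*} {d : Ξ → σ →₀ ℕ} {lt : Ξ → Ξ → Prop}

theorem le_degList_of_mem {ξ : Ξ} {V : List Ξ} (h : ξ ∈ V) : d ξ ≤ degList d V :=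
  List.le_sum_of_mem (List.mem_map_of_mem h)

theorem degList_reverse (V : List Ξ) : degList d V.reverse = degList d V := by
  simp [degList, List.sum_reverse]

theorem length_le_degree_degList (hd : ∀ ξ, d ξ ≠ 0) (V : List Ξ) :
    V.length ≤ (degList d V).degree := by
  induction V with
  | nil => simp
  | cons ξ V ih =>
    have hξ : 0 < (d ξ).degree :=
      Nat.pos_of_ne_zero ((Finsupp.degree_eq_zero_iff _).not.2 (hd ξ))
    simp only [degList, List.map_cons, List.sum_cons, map_add, List.length_cons] at ih ⊢
    omega

theorem wellFoundedOn_ltFromLeft_degList_fiber (hd : ∀ ξ, d ξ ≠ 0)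
    (hwf : ∀ γ, {ξ | d ξ ≤ γ}.WellFoundedOn lt) (γ : σ →₀ ℕ) :
    (degList d ⁻¹' {γ}).WellFoundedOn (ltFromLeft lt) :=
  (wellFoundedOn_ltFromLeft (hwf γ) γ.degree).subset fun V (hV : degList d V = γ) =>
    ⟨hV ▸ length_le_degree_degList hd V, fun _ hξ => hV ▸ le_degList_of_mem hξ⟩

theorem wellFounded_ltL (hd : ∀ ξ, d ξ ≠ 0) (hwf : ∀ γ, {ξ | d ξ ≤ γ}.WellFoundedOn lt) :
    WellFounded (ltL d lt) := by
  refine Subrelation.wf ?_ (wellFounded_lt.onFun.prod_lex_of_wellFoundedOn_fiber (g := id)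
    (wellFoundedOn_ltFromLeft_degList_fiber hd hwf))
  rintro U V (⟨δ, hδ, h⟩ | ⟨h, hUV⟩)
  · exact Prod.Lex.left _ _ (h ▸ lt_add_of_pos_right _ (pos_iff_ne_zero.2 hδ))
  · exact Prod.lex_iff.2 (Or.inr ⟨h, hUV⟩)

theorem ltR_eq_ltL_onFun_reverse : ltR d lt = Function.onFun (ltL d lt) List.reverse := by
  ext U V
  simp [ltR, ltL, Function.onFun, degList_reverse]

end DegList

theorem ltL_ltR_wellFounded_general
    {σ : Type*} {Ξ : Type*} (d : Ξ → σ →₀ ℕ) (hd : ∀ ξ, d ξ ≠ 0)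
    (lt : Ξ → Ξ → Prop) (hlt : IsStrictTotalOrder Ξ lt)
    (hwf : ∀ γ : σ →₀ ℕ, WellFounded (fun a b : {ξ : Ξ // d ξ = γ} => lt a.1 b.1)) :
    WellFounded (ltL d lt) ∧ WellFounded (ltR d lt) := by
  have hL : WellFounded (ltL d lt) :=
    wellFounded_ltL hd (wellFoundedOn_le_of_wellFoundedOn_eq hwf)
  exact ⟨hL, ltR_eq_ltL_onFun_reverse ▸ hL.onFun⟩

/-- **Lemma.** If the restriction of the total order `◁` to each set
`{ξ : deg(z_ξ) = γ}` is well-founded, then the orders `◁_L` and `◁_R` on the set of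
finite sequences `P(Ξ)` are both well-founded. -/
theorem ltL_ltR_wellFounded
    {k σ H : Type*} [Field k] [Nonempty σ] [DecidableEq σ] [Ring H] [Algebra k H]
    (𝒜 : (σ →₀ ℕ) → Submodule k H) (hH : IsConnGradedAlg (k := k) 𝒜)
    {Ξ : Type*} (z : Ξ → H) (d : Ξ → σ →₀ ℕ)
    (hz : ∀ ξ, z ξ ∈ 𝒜 (d ξ)) (hd : ∀ ξ, d ξ ≠ 0)
    (lt : Ξ → Ξ → Prop) (hlt : IsStrictTotalOrder Ξ lt)
    (hwf : ∀ γ : σ →₀ ℕ, WellFounded (fun a b : {ξ : Ξ // d ξ = γ} => lt a.1 b.1)) :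
    WellFounded (ltL d lt) ∧ WellFounded (ltR d lt) :=
  ltL_ltR_wellFounded_general d hd lt hlt hwf

end AdamsPaper
end

section
/- Let H be a connected Γ-graded algebra over a field k, {z_ξ}_{ξ∈Ξ} a family of homogeneous elements of H_+, ◁ a total order on Ξ, and h: Ξ → ℕ∪{∞} with h(ξ) ≥ 2 for each ξ, satisfying conditions (a)–(c). If the family {z_V : V ∈ P(Ξ,◁,h)} is linearly independent in H (respectively spans H), then for every total order < on Ξ the family {z_V : V ∈ P(Ξ,<,h)} is linearly independent in H (respectively spans H). -/
open scoped TensorProduct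
open Classical

/-!
Order multisets of letters by the Dershowitz–Manna extension of `◁`, restricted to steps that do
not raise the degree; since only finitely many degrees lie below a given one, (c) makes this order
well founded. Along it, every word `z_W` is congruent to `c • z_S`, with `c ≠ 0` and `S` the
`◁`-sorted rearrangement of `W`, modulo admissible `◁`-words of strictly smaller multiset: moving
a letter `ν` right past a smaller `μ` costs the scalar `a ν μ` of (b) and a term of `H[ν,◁,h]`,
whose words of the right degree have all letters below `ν` and hence smaller multisets, and a
sorted word violating the bound `h` lies in that span by (a). For `<`-sorted words this says that
the `<`-family is triangular with nonzero diagonal over the `◁`-family, both indexed by the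
multisets with multiplicities below `h`, and such a change of family preserves linear
independence and spanning.
-/

open Relation Submodule

theorem Finset.exists_rel_maximal {ι : Type*} {R : ι → ι → Prop} [IsStrictOrder ι R]
    {s : Finset ι} (hs : s.Nonempty) : ∃ i ∈ s, ∀ j ∈ s, ¬ R i j := by
  obtain ⟨⟨i, hi⟩, -, hmax⟩ :=
    (s.wellFoundedOn (r := Function.swap R)).has_min Set.univ ⟨⟨_, hs.choose_spec⟩, trivial⟩
  exact ⟨i, hi, fun j hj => hmax ⟨j, hj⟩ trivial⟩

section LinearAlgebra

variable {k M ι : Type*}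

theorem DirectSum.IsInternal.mem_span_deg_eq [Semiring k] [AddCommMonoid M] [Module k M] {β : Type*}
    [DecidableEq ι] {𝒜 : ι → Submodule k M} (h𝒜 : DirectSum.IsInternal 𝒜) {f : β → M}
    {deg : β → ι} (hf : ∀ b, f b ∈ 𝒜 (deg b)) {P : β → Prop} {i : ι} {x : M}
    (hx : x ∈ span k {y | ∃ b, P b ∧ y = f b}) (hxi : x ∈ 𝒜 i) :
    x ∈ span k {y | ∃ b, (P b ∧ deg b = i) ∧ y = f b} := by
  let π : M →ₗ[k] M := (𝒜 i).subtype ∘ₗ DirectSum.component k ι (fun j => 𝒜 j) i ∘ₗ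
    (LinearEquiv.ofBijective (DirectSum.coeLinearMap 𝒜) h𝒜).symm.toLinearMap
  have hπ : ∀ j y, y ∈ 𝒜 j → π y = if j = i then y else 0 := by
    intro j y hy
    split_ifs with hji
    · subst hji
      simp [π, ← DirectSum.apply_eq_component, h𝒜.ofBijective_coeLinearMap_of_mem hy]
    · simp [π, ← DirectSum.apply_eq_component, h𝒜.ofBijective_coeLinearMap_of_mem_ne hji hy]
  have hmap : (span k {y | ∃ b, P b ∧ y = f b}).map π ≤
      span k {y | ∃ b, (P b ∧ deg b = i) ∧ y = f b} := by
    rw [map_span_le]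
    rintro _ ⟨b, hb, rfl⟩
    rw [hπ _ _ (hf b)]
    split_ifs with hbi
    exacts [subset_span ⟨b, ⟨hb, hbi⟩, rfl⟩, zero_mem _]
  simpa [hπ i x hxi] using hmap ⟨x, hx, rfl⟩

variable [Field k] [AddCommGroup M] [Module k M] {b v : ι → M} {c : ι → k} {R : ι → ι → Prop}

theorem linearIndependent_of_sub_smul_mem_span [IsStrictOrder ι R]
    (hb : LinearIndependent k b) (hc : ∀ i, c i ≠ 0)
    (hv : ∀ i, v i - c i • b i ∈ span k (b '' {j | R j i})) : LinearIndependent k v := by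
  rw [linearIndependent_iff']
  intro s f hsum
  by_contra! hne
  obtain ⟨i, his, hfi⟩ := hne
  obtain ⟨i₀, hi₀, hmax⟩ := Finset.exists_rel_maximal (R := R)
    (s := s.filter (f · ≠ 0)) ⟨i, Finset.mem_filter.mpr ⟨his, hfi⟩⟩
  simp only [Finset.mem_filter] at hi₀ hmax
  set N := span k (b '' {j | j ≠ i₀})
  have hlow : ∀ j, ¬ R i₀ j → span k (b '' {l | R l j}) ≤ N := fun j hj =>
    span_mono (Set.image_mono fun l hl => by rintro rfl; exact hj hl)
  have hvN : ∀ j, j ≠ i₀ → ¬ R i₀ j → v j ∈ N := fun j hj hRj => by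
    simpa using
      add_mem (smul_mem _ (c j) (subset_span (Set.mem_image_of_mem b hj))) (hlow j hRj (hv j))
  have hfv : f i₀ • v i₀ ∈ N := by
    rw [← Finset.add_sum_erase s _ hi₀.1] at hsum
    rw [eq_neg_of_add_eq_zero_left hsum]
    refine neg_mem (sum_mem fun j hj => ?_)
    obtain ⟨hji₀, hjs⟩ := Finset.mem_erase.mp hj
    by_cases hfj : f j = 0
    · simp [hfj]
    · exact smul_mem _ _ (hvN j hji₀ (hmax j ⟨hjs, hfj⟩))
  have hfcb : (f i₀ * c i₀) • b i₀ ∈ N := by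
    have := sub_mem hfv (smul_mem N (f i₀) (hlow i₀ (irrefl i₀) (hv i₀)))
    rwa [smul_sub, sub_sub_cancel, smul_smul] at this
  exact hb.notMem_span_image (s := {j | j ≠ i₀}) (by simp)
    ((smul_mem_iff N (mul_ne_zero hi₀.2 (hc i₀))).mp hfcb)

theorem span_range_le_of_sub_smul_mem_span (hR : WellFounded R) (hc : ∀ i, c i ≠ 0)
    (hv : ∀ i, v i - c i • b i ∈ span k (b '' {j | R j i})) :
    span k (Set.range b) ≤ span k (Set.range v) := by
  refine span_le.mpr (Set.range_subset_iff.mpr fun i => ?_)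
  induction i using hR.induction with
  | _ i ih =>
    have hlow : span k (b '' {j | R j i}) ≤ span k (Set.range v) :=
      span_le.mpr (by rintro _ ⟨j, hj, rfl⟩; exact ih j hj)
    have : c i • b i ∈ span k (Set.range v) := by
      simpa using sub_mem (subset_span (Set.mem_range_self i)) (hlow (hv i))
    exact (smul_mem_iff _ (hc i)).mp this

end LinearAlgebra

namespace AdamsPaper

section Sorting

variable {Ξ : Type*} {lt : Ξ → Ξ → Prop}

def WeakLT (lt : Ξ → Ξ → Prop) (a b : Ξ) : Prop := lt a b ∨ a = b

instance [IsStrictOrder Ξ lt] : IsTrans Ξ (WeakLT lt) where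
  trans _ _ _
    | .inl hab, .inl hbc => .inl (_root_.trans hab hbc)
    | .inl hab, .inr rfl => .inl hab
    | .inr rfl, hbc => hbc

instance [IsStrictOrder Ξ lt] : Std.Antisymm (WeakLT lt) where
  antisymm _ _
    | .inl hab, .inl hba => absurd (_root_.trans hab hba) (irrefl _)
    | .inl _, .inr hba => hba.symm
    | .inr hab, _ => hab

instance [IsStrictTotalOrder Ξ lt] : Std.Total (WeakLT lt) where
  total a b := by
    rcases trichotomous_of lt a b with hab | rfl | hba
    · exact .inl (.inl hab)
    · exact .inl (.inr rfl)
    · exact .inr (.inl hba)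

variable [IsStrictTotalOrder Ξ lt]

theorem sort_coe_of_pairwise {V : List Ξ} (hV : V.Pairwise (WeakLT lt)) :
    (V : Multiset Ξ).sort (WeakLT lt) = V :=
  List.Perm.eq_of_pairwise (fun _ _ _ _ => antisymm) (Multiset.pairwise_sort _ _) hV
    (Multiset.coe_eq_coe.mp (Multiset.sort_eq _ _))

theorem forall_lt_of_getLast?_lt {V : List Ξ} (hV : V.Pairwise (WeakLT lt)) {ξ : Ξ}
    (hlast : ∀ ν ∈ V.getLast?, lt ν ξ) : ∀ x ∈ V, lt x ξ := by
  rcases V.eq_nil_or_concat' with rfl | ⟨V', l, rfl⟩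
  · simp
  have hl : lt l ξ := hlast l (by simp)
  intro x hx
  rcases List.mem_append.mp hx with hx | hx
  · rcases (List.pairwise_append.mp hV).2.2 x hx l (List.mem_singleton_self l) with hxl | rfl
    exacts [_root_.trans hxl hl, hl]
  · rwa [List.mem_singleton.mp hx]

end Sorting

section Admissible

variable {Ξ : Type*} {lt : Ξ → Ξ → Prop} {h : Ξ → ℕ∞}

def MultLT (h : Ξ → ℕ∞) (m : Multiset Ξ) : Prop := ∀ ξ, (m.count ξ : ℕ∞) < h ξ

theorem cnt_eq_count (V : List Ξ) (ξ : Ξ) : cnt V ξ = V.count ξ := by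
  induction V with
  | nil => rfl
  | cons a V ih =>
    simp only [cnt] at ih
    simp [cnt, List.count_cons, ih, add_comm]

theorem adm_iff [IsStrictTotalOrder Ξ lt] {V : List Ξ} :
    Adm lt h V ↔ V.Pairwise (WeakLT lt) ∧ MultLT h V := by
  simp only [Adm, MultLT, cnt_eq_count, Multiset.coe_count]
  rw [← List.isChain_iff_pairwise]
  rfl

theorem adm_sort [IsStrictTotalOrder Ξ lt] {m : Multiset Ξ} (hm : MultLT h m) :
    Adm lt h (m.sort (WeakLT lt)) :=
  adm_iff.mpr ⟨Multiset.pairwise_sort m (WeakLT lt), (Multiset.sort_eq m (WeakLT lt)).symm ▸ hm⟩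

noncomputable def admEquiv (lt : Ξ → Ξ → Prop) [IsStrictTotalOrder Ξ lt] (h : Ξ → ℕ∞) :
    {V : List Ξ // Adm lt h V} ≃ {m : Multiset Ξ // MultLT h m} where
  toFun V := ⟨V.1, (adm_iff.mp V.2).2⟩
  invFun m := ⟨m.1.sort (WeakLT lt), adm_sort m.2⟩
  left_inv V := Subtype.ext (sort_coe_of_pairwise (adm_iff.mp V.2).1)
  right_inv m := Subtype.ext (Multiset.sort_eq m.1 (WeakLT lt))

end Admissible

section DershowitzManna

variable {σ Ξ : Type*} {d : Ξ → σ →₀ ℕ} {lt : Ξ → Ξ → Prop}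

def DMStep (d : Ξ → σ →₀ ℕ) (lt : Ξ → Ξ → Prop) (x y : Multiset Ξ) : Prop :=
  (x.map d).sum ≤ (y.map d).sum ∧
    ∃ C X Y : Multiset Ξ, X ≠ 0 ∧ y = C + X ∧ x = C + Y ∧ ∀ a ∈ Y, ∃ b ∈ X, lt a b

abbrev DMLT (d : Ξ → σ →₀ ℕ) (lt : Ξ → Ξ → Prop) : Multiset Ξ → Multiset Ξ → Prop :=
  TransGen (DMStep d lt)

theorem dmLT_cons (ξ : Ξ) (x : Multiset Ξ) : DMLT d lt x (ξ ::ₘ x) :=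
  .single ⟨by simp, x, {ξ}, 0, Multiset.singleton_ne_zero ξ,
    by rw [add_comm, Multiset.singleton_add], (add_zero x).symm, by simp⟩

theorem DMStep.add_left (w : Multiset Ξ) {x y : Multiset Ξ} (hxy : DMStep d lt x y) :
    DMStep d lt (w + x) (w + y) := by
  obtain ⟨hdeg, C, X, Y, hX, rfl, rfl, hYX⟩ := hxy
  exact ⟨by simpa using hdeg, w + C, X, Y, hX, (add_assoc _ _ _).symm, (add_assoc _ _ _).symm, hYX⟩

theorem DMLT.cons (ξ : Ξ) {x y : Multiset Ξ} (hxy : DMLT d lt x y) :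
    DMLT d lt (ξ ::ₘ x) (ξ ::ₘ y) := by
  have := TransGen.lift ({ξ} + ·) (fun _ _ => DMStep.add_left (d := d) (lt := lt) {ξ}) _ _ hxy
  simpa only [Function.onFun, Multiset.singleton_add] using this

noncomputable def countOn (s : Set Ξ) (x : Multiset Ξ) : s →₀ ℕ :=
  Finsupp.comapDomain Subtype.val (Multiset.toFinsupp x) Subtype.val_injective.injOn

theorem countOn_apply (s : Set Ξ) (x : Multiset Ξ) (a : s) : countOn s x a = x.count (a : Ξ) := by
  simp [countOn, Finsupp.comapDomain_apply]

-- The `lt`-largest letter removed by the step is where the multiplicities first differ.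
theorem DMStep.lex_countOn [IsStrictTotalOrder Ξ lt] {s : Set Ξ} {x y : Multiset Ξ}
    (hxy : DMStep d lt x y) (hy : ∀ ξ ∈ y, ξ ∈ s) :
    Finsupp.Lex (fun a b : s => lt b a) (· < ·) (countOn s x) (countOn s y) := by
  obtain ⟨-, C, X, Y, hX, rfl, rfl, hYX⟩ := hxy
  obtain ⟨b, hbX, hbmax⟩ :=
    Finset.exists_rel_maximal (R := lt) (Multiset.toFinset_nonempty.mpr hX)
  rw [Multiset.mem_toFinset] at hbX
  simp only [Multiset.mem_toFinset] at hbmax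
  have hnotY : ∀ j, lt b j ∨ j = b → j ∉ Y := by
    rintro j hj hjY
    obtain ⟨b', hb'X, hjb'⟩ := hYX j hjY
    rcases hj with hbj | rfl
    exacts [hbmax b' hb'X (_root_.trans hbj hjb'), hbmax b' hb'X hjb']
  refine Finsupp.lex_def.mpr ⟨⟨b, hy b (by simp [hbX])⟩, fun j hj => ?_, ?_⟩
  · simp only [countOn_apply, Multiset.count_add,
      Multiset.count_eq_zero.mpr (hnotY j (.inl hj)), Multiset.count_eq_zero.mpr (hbmax j · hj)]
  · simp only [countOn_apply, Multiset.count_add, Multiset.count_eq_zero.mpr (hnotY b (.inr rfl))]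
    exact Nat.lt_add_of_pos_right (Multiset.count_pos.mpr hbX)

theorem wellFounded_dmStep [DecidableEq σ] [IsStrictTotalOrder Ξ lt]
    (hwell : ∀ γ, WellFounded (fun u v : {ξ : Ξ // d ξ = γ} => lt u.1 v.1)) :
    WellFounded (DMStep d lt) := by
  refine ⟨fun y => ?_⟩
  set s : Set Ξ := {ξ | d ξ ≤ (y.map d).sum}
  have hs : s.WellFoundedOn lt :=
    ((Finset.Iic (y.map d).sum).wellFoundedOn_bUnion.mpr fun δ _ => hwell δ).subset
      fun ξ hξ => Set.mem_biUnion (Finset.mem_Iic.mpr hξ) rfl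
  have : Std.Trichotomous (fun a b : s => lt b a) := ⟨fun a b hba hab =>
    Subtype.ext (((trichotomous_of lt a.1 b.1).resolve_left hab).resolve_right hba)⟩
  have hlex := InvImage.wf (countOn s) <|
    Finsupp.Lex.wellFounded' (fun n => Nat.not_lt_zero n) wellFounded_lt hs
  suffices ∀ x, (x.map d).sum ≤ (y.map d).sum → Acc (DMStep d lt) x from this y le_rfl
  intro x
  induction x using hlex.induction with
  | _ x ih =>
    refine fun hx => Acc.intro x fun x' hx' =>
      ih x' (hx'.lex_countOn fun ξ hξ => ?_) (hx'.1.trans hx)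
    exact (Multiset.le_sum_of_mem (Multiset.mem_map_of_mem d hξ)).trans hx

theorem wellFounded_dmLT [DecidableEq σ] [IsStrictTotalOrder Ξ lt]
    (hwell : ∀ γ, WellFounded (fun u v : {ξ : Ξ // d ξ = γ} => lt u.1 v.1)) :
    WellFounded (DMLT d lt) :=
  (wellFounded_dmStep hwell).transGen

end DershowitzManna

section Straightening

variable {k σ H Ξ : Type*} [Field k] [Ring H] [Algebra k H]
  {z : Ξ → H} {d : Ξ → σ →₀ ℕ} {lt : Ξ → Ξ → Prop} {h : Ξ → ℕ∞}

@[simp] theorem zProd_cons (ξ : Ξ) (V : List Ξ) : zProd z (ξ :: V) = z ξ * zProd z V := by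
  simp [zProd]

@[simp] theorem zProd_append (U V : List Ξ) : zProd z (U ++ V) = zProd z U * zProd z V := by
  simp [zProd]

@[simp] theorem zProd_replicate (n : ℕ) (ξ : Ξ) : zProd z (List.replicate n ξ) = z ξ ^ n := by
  simp [zProd]

theorem zProd_mem_graded {𝒜 : (σ →₀ ℕ) → Submodule k H} [SetLike.GradedMonoid 𝒜]
    (hz : ∀ ξ, z ξ ∈ 𝒜 (d ξ)) (V : List Ξ) : zProd z V ∈ 𝒜 (degList d V) :=
  SetLike.list_prod_map_mem_graded V d z fun ξ _ => hz ξ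

variable (k z lt h) in
def admSpan (P : Multiset Ξ → Prop) : Submodule k H :=
  span k {x | ∃ U : List Ξ, Adm lt h U ∧ P U ∧ x = zProd z U}

theorem admSpan_mono {P Q : Multiset Ξ → Prop} (hPQ : ∀ m, P m → Q m) :
    admSpan k z lt h P ≤ admSpan k z lt h Q :=
  span_mono fun _ ⟨U, hU, hP, hx⟩ => ⟨U, hU, hPQ _ hP, hx⟩

variable (k z d lt h) in
def Reduces (m : Multiset Ξ) : Prop :=
  ∀ W : List Ξ, (W : Multiset Ξ) = m →
    zProd z W ∈ admSpan k z lt h (ReflTransGen (DMStep d lt) · m)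

variable (k z d lt h) in
def Straightens [IsStrictTotalOrder Ξ lt] (W : List Ξ) : Prop :=
  ∃ c : k, c ≠ 0 ∧ zProd z W - c • zProd z ((W : Multiset Ξ).sort (WeakLT lt)) ∈
    admSpan k z lt h (DMLT d lt · W)

theorem zProd_mem_admSpan_of_dmLT {m : Multiset Ξ}
    (hred : ∀ m', DMLT d lt m' m → Reduces k z d lt h m') {W : List Ξ}
    (hW : DMLT d lt W m) : zProd z W ∈ admSpan k z lt h (DMLT d lt · m) :=
  admSpan_mono (fun _ hU => TransGen.trans_right hU hW) (hred W hW W rfl)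

theorem mul_mem_admSpan {μ : Ξ} {m : Multiset Ξ}
    (hred : ∀ m', DMLT d lt m' (μ ::ₘ m) → Reduces k z d lt h m') {x : H}
    (hx : x ∈ admSpan k z lt h (DMLT d lt · m)) :
    z μ * x ∈ admSpan k z lt h (DMLT d lt · (μ ::ₘ m)) := by
  have hle : admSpan k z lt h (DMLT d lt · m) ≤
      (admSpan k z lt h (DMLT d lt · (μ ::ₘ m))).comap (LinearMap.mulLeft k (z μ)) := by
    refine span_le.mpr ?_
    rintro _ ⟨U, -, hU, rfl⟩
    have := zProd_mem_admSpan_of_dmLT hred (W := μ :: U) (hU.cons μ)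
    rwa [zProd_cons] at this
  exact hle hx

theorem dmStep_of_forall_lt (C : Multiset Ξ) {X Y : Multiset Ξ} {ξ : Ξ} (hξ : ξ ∈ X)
    (hdeg : (Y.map d).sum = (X.map d).sum) (hY : ∀ a ∈ Y, lt a ξ) :
    DMStep d lt (Y + C) (X + C) :=
  ⟨by simp [hdeg], C, X, Y, fun h0 => Multiset.notMem_zero ξ (h0 ▸ hξ), add_comm _ _, add_comm _ _,
    fun a ha => ⟨ξ, hξ, hY a ha⟩⟩

variable [IsStrictTotalOrder Ξ lt]

theorem straightens_of_pairwise {W : List Ξ} (hW : W.Pairwise (WeakLT lt)) :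
    Straightens k z d lt h W :=
  ⟨1, one_ne_zero, by simp [sort_coe_of_pairwise hW]⟩

variable [DecidableEq σ] {𝒜 : (σ →₀ ℕ) → Submodule k H} [SetLike.GradedMonoid 𝒜]

-- Only the component of `x` of degree `|X|` matters, and its admissible words `U` have all
-- letters below `ξ ∈ X`, so replacing `X` by `U` is a step down.
theorem mul_zProd_mem_admSpan_of_mem_Hspan (h𝒜 : DirectSum.IsInternal 𝒜)
    (hz : ∀ ξ, z ξ ∈ 𝒜 (d ξ)) {X : Multiset Ξ} {R : List Ξ} {m : Multiset Ξ} (hm : X + R = m)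
    (hred : ∀ m', DMLT d lt m' m → Reduces k z d lt h m') {ξ : Ξ} (hξ : ξ ∈ X) {x : H}
    (hx : x ∈ Hspan (k := k) z lt h ξ) (hxX : x ∈ 𝒜 (X.map d).sum) :
    x * zProd z R ∈ admSpan k z lt h (DMLT d lt · m) := by
  have hx' : x ∈ span k {y | ∃ U, ((Adm lt h U ∧ ∀ ν ∈ U.getLast?, lt ν ξ) ∧
      degList d U = (X.map d).sum) ∧ y = zProd z U} :=
    h𝒜.mem_span_deg_eq (zProd_mem_graded hz) (by simpa only [Hspan, and_assoc] using hx)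
      hxX
  have hle : span k {y | ∃ U, ((Adm lt h U ∧ ∀ ν ∈ U.getLast?, lt ν ξ) ∧
      degList d U = (X.map d).sum) ∧ y = zProd z U} ≤
      (admSpan k z lt h (DMLT d lt · m)).comap (LinearMap.mulRight k (zProd z R)) := by
    refine span_le.mpr ?_
    rintro _ ⟨U, ⟨⟨hU, hlast⟩, hdeg⟩, rfl⟩
    have hstep : DMStep d lt (U + R) m :=
      hm ▸ dmStep_of_forall_lt R hξ (by simpa [degList] using hdeg) fun a ha => forall_lt_of_getLast?_lt (adm_iff.mp hU).1 hlast a (Multiset.mem_coe.mp ha)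
    have := zProd_mem_admSpan_of_dmLT hred (W := U ++ R) (by simpa using TransGen.single hstep)
    rwa [zProd_append] at this
  exact hle hx'

theorem straightens_cons (h𝒜 : DirectSum.IsInternal 𝒜) (hz : ∀ ξ, z ξ ∈ 𝒜 (d ξ))
    {a : Ξ → Ξ → k} (hcomm : ∀ μ ν : Ξ, lt μ ν → a ν μ ≠ 0 ∧
      z ν * z μ - a ν μ • (z μ * z ν) ∈ Hspan (k := k) z lt h ν)
    (ξ : Ξ) {V : List Ξ} (hV : V.Pairwise (WeakLT lt))
    (hred : ∀ m', DMLT d lt m' ↑(ξ :: V) → Reduces k z d lt h m') :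
    Straightens k z d lt h (ξ :: V) := by
  induction V with
  | nil => exact straightens_of_pairwise (List.pairwise_singleton _ ξ)
  | cons μ V ih =>
    obtain ⟨hμV, hV⟩ := List.pairwise_cons.mp hV
    by_cases hξμ : WeakLT lt ξ μ
    · refine straightens_of_pairwise (List.pairwise_cons.mpr ⟨fun b hb => ?_, hV.cons hμV⟩)
      rcases List.mem_cons.mp hb with rfl | hb
      exacts [hξμ, _root_.trans hξμ (hμV b hb)]
    have hμξ : lt μ ξ := by
      rcases trichotomous_of lt ξ μ with hξμ' | rfl | hμξ
      exacts [absurd (.inl hξμ') hξμ, absurd (.inr rfl) hξμ, hμξ]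
    have hm : ((ξ :: μ :: V : List Ξ) : Multiset Ξ) = μ ::ₘ ↑(ξ :: V) := Multiset.cons_swap ξ μ V
    rw [hm] at hred
    obtain ⟨c, hc, hcV⟩ := ih hV fun m' hm' => hred m' (hm'.trans (dmLT_cons μ _))
    obtain ⟨ha, hE⟩ := hcomm μ ξ hμξ
    set S := (↑(ξ :: V) : Multiset Ξ).sort (WeakLT lt)
    have hsort : (μ ::ₘ ↑(ξ :: V)).sort (WeakLT lt) = μ :: S := by
      refine Multiset.sort_cons _ _ _ fun b hb => ?_
      rcases List.mem_cons.mp (Multiset.mem_coe.mp hb) with rfl | hb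
      exacts [.inl hμξ, hμV b hb]
    refine ⟨a ξ μ * c, mul_ne_zero ha hc, ?_⟩
    rw [hm, hsort]
    have key : zProd z (ξ :: μ :: V) - (a ξ μ * c) • zProd z (μ :: S) =
        a ξ μ • (z μ * (zProd z (ξ :: V) - c • zProd z S)) +
        (z ξ * z μ - a ξ μ • (z μ * z ξ)) * zProd z V := by
      simp only [zProd_cons, mul_sub, sub_mul, smul_sub, mul_smul_comm, smul_mul_assoc, smul_smul,
        mul_assoc]
      abel
    rw [key]
    refine add_mem (smul_mem _ _ (mul_mem_admSpan hred hcV)) ?_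
    refine mul_zProd_mem_admSpan_of_mem_Hspan h𝒜 hz (X := μ ::ₘ {ξ}) (by simp) hred (by simp) hE ?_
    have hξμ_mem := SetLike.mul_mem_graded (hz ξ) (hz μ)
    rw [add_comm] at hξμ_mem
    simpa using sub_mem hξμ_mem (smul_mem _ (a ξ μ) (SetLike.mul_mem_graded (hz μ) (hz ξ)))

theorem straightens (h𝒜 : DirectSum.IsInternal 𝒜) (hz : ∀ ξ, z ξ ∈ 𝒜 (d ξ))
    {a : Ξ → Ξ → k} (hcomm : ∀ μ ν : Ξ, lt μ ν → a ν μ ≠ 0 ∧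
      z ν * z μ - a ν μ • (z μ * z ν) ∈ Hspan (k := k) z lt h ν)
    (W : List Ξ) (hred : ∀ m', DMLT d lt m' W → Reduces k z d lt h m') :
    Straightens k z d lt h W := by
  induction W with
  | nil => exact straightens_of_pairwise List.Pairwise.nil
  | cons ξ W ih =>
    obtain ⟨c₁, hc₁, h₁⟩ := ih fun m' hm' => hred m' (hm'.trans (dmLT_cons ξ W))
    set S := (W : Multiset Ξ).sort (WeakLT lt)
    have hS : ((ξ :: S : List Ξ) : Multiset Ξ) = ↑(ξ :: W) := by
      rw [← Multiset.cons_coe, Multiset.sort_eq]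
      rfl
    obtain ⟨c₂, hc₂, h₂⟩ :=
      straightens_cons h𝒜 hz hcomm ξ (Multiset.pairwise_sort _ (WeakLT lt)) (by rwa [hS])
    rw [hS] at h₂
    refine ⟨c₁ * c₂, mul_ne_zero hc₁ hc₂, ?_⟩
    set T := (↑(ξ :: W) : Multiset Ξ).sort (WeakLT lt)
    have key : zProd z (ξ :: W) - (c₁ * c₂) • zProd z T =
        c₁ • (zProd z (ξ :: S) - c₂ • zProd z T) + z ξ * (zProd z W - c₁ • zProd z S) := by
      simp only [zProd_cons, mul_sub, smul_sub, mul_smul_comm, smul_smul, mul_comm c₁ c₂]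
      abel
    rw [key]
    exact add_mem (smul_mem _ _ h₂) (mul_mem_admSpan (μ := ξ) (m := W) hred h₁)

theorem sort_mem_admSpan_of_not_multLT (h𝒜 : DirectSum.IsInternal 𝒜)
    (hz : ∀ ξ, z ξ ∈ 𝒜 (d ξ)) {a : Ξ → Ξ → k} (hcomm : ∀ μ ν : Ξ, lt μ ν → a ν μ ≠ 0 ∧
      z ν * z μ - a ν μ • (z μ * z ν) ∈ Hspan (k := k) z lt h ν)
    (hpow : ∀ ξ : Ξ, ∀ n : ℕ, h ξ = (n : ℕ∞) → z ξ ^ n ∈ Hspan (k := k) z lt h ξ)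
    (hh : ∀ ξ, h ξ ≠ 0) {m : Multiset Ξ} (hm : ¬ MultLT h m)
    (hred : ∀ m', DMLT d lt m' m → Reduces k z d lt h m') :
    zProd z (m.sort (WeakLT lt)) ∈ admSpan k z lt h (DMLT d lt · m) := by
  obtain ⟨ξ, hξ⟩ : ∃ ξ, h ξ ≤ m.count ξ := by simpa [MultLT] using hm
  have hn : ((h ξ).toNat : ℕ∞) = h ξ :=
    ENat.natCast_toNat (ne_top_of_le_ne_top (ENat.natCast_ne_top _) hξ)
  set n := (h ξ).toNat
  have hn0 : n ≠ 0 := fun h0 => hh ξ (by rw [← hn, h0]; rfl)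
  have hrep : Multiset.replicate n ξ ≤ m :=
    Multiset.le_count_iff_replicate_le.mp (by rw [← hn] at hξ; exact_mod_cast hξ)
  set R := (m - Multiset.replicate n ξ).toList
  have hmR : Multiset.replicate n ξ + R = m := by simp [R, add_tsub_cancel_of_le hrep]
  have hW : zProd z (List.replicate n ξ ++ R) ∈ admSpan k z lt h (DMLT d lt · m) := by
    rw [zProd_append, zProd_replicate]
    exact mul_zProd_mem_admSpan_of_mem_Hspan h𝒜 hz hmR hred
      (Multiset.mem_replicate.mpr ⟨hn0, rfl⟩) (hpow ξ n hn.symm)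
      (by simpa using SetLike.pow_mem_graded n (hz ξ))
  have hWm : ((List.replicate n ξ ++ R : List Ξ) : Multiset Ξ) = m := by
    rwa [← Multiset.coe_add, Multiset.coe_replicate]
  obtain ⟨c, hc, hcW⟩ := straightens h𝒜 hz hcomm _ (hWm ▸ hred)
  rw [hWm] at hcW
  have := sub_mem hW hcW
  rwa [sub_sub_cancel, smul_mem_iff _ hc] at this

theorem reduces_of_forall_dmLT (h𝒜 : DirectSum.IsInternal 𝒜)
    (hz : ∀ ξ, z ξ ∈ 𝒜 (d ξ)) {a : Ξ → Ξ → k} (hcomm : ∀ μ ν : Ξ, lt μ ν → a ν μ ≠ 0 ∧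
      z ν * z μ - a ν μ • (z μ * z ν) ∈ Hspan (k := k) z lt h ν)
    (hpow : ∀ ξ : Ξ, ∀ n : ℕ, h ξ = (n : ℕ∞) → z ξ ^ n ∈ Hspan (k := k) z lt h ξ)
    (hh : ∀ ξ, h ξ ≠ 0) {m : Multiset Ξ} (hred : ∀ m', DMLT d lt m' m → Reduces k z d lt h m') :
    Reduces k z d lt h m := by
  rintro W rfl
  obtain ⟨c, -, hc⟩ := straightens h𝒜 hz hcomm W hred
  have hsort : zProd z ((W : Multiset Ξ).sort (WeakLT lt)) ∈
      admSpan k z lt h (ReflTransGen (DMStep d lt) · W) := by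
    by_cases hm : MultLT h W
    · exact subset_span ⟨_, adm_sort hm, by rw [Multiset.sort_eq], rfl⟩
    · exact admSpan_mono (fun _ => TransGen.to_reflTransGen)
        (sort_mem_admSpan_of_not_multLT h𝒜 hz hcomm hpow hh hm hred)
  simpa using add_mem (admSpan_mono (fun _ => TransGen.to_reflTransGen) hc) (smul_mem _ c hsort)

theorem straightens_of_wellFounded (h𝒜 : DirectSum.IsInternal 𝒜)
    (hz : ∀ ξ, z ξ ∈ 𝒜 (d ξ)) {a : Ξ → Ξ → k} (hcomm : ∀ μ ν : Ξ, lt μ ν → a ν μ ≠ 0 ∧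
      z ν * z μ - a ν μ • (z μ * z ν) ∈ Hspan (k := k) z lt h ν)
    (hpow : ∀ ξ : Ξ, ∀ n : ℕ, h ξ = (n : ℕ∞) → z ξ ^ n ∈ Hspan (k := k) z lt h ξ)
    (hh : ∀ ξ, h ξ ≠ 0)
    (hwell : ∀ γ, WellFounded (fun u v : {ξ : Ξ // d ξ = γ} => lt u.1 v.1)) (W : List Ξ) :
    Straightens k z d lt h W :=
  straightens h𝒜 hz hcomm W fun m _ => (wellFounded_dmLT hwell).induction
    (C := Reduces k z d lt h) m fun _ => reduces_of_forall_dmLT h𝒜 hz hcomm hpow hh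

end Straightening

section ChangeOfOrder

variable {k σ H Ξ : Type*} [Field k] [Ring H] [Algebra k H]
  {z : Ξ → H} {d : Ξ → σ →₀ ℕ} {lt : Ξ → Ξ → Prop} [IsStrictTotalOrder Ξ lt] {h : Ξ → ℕ∞}

theorem linearIndependent_adm_iff :
    LinearIndependent k (fun V : {V // Adm lt h V} => zProd z V.1) ↔
      LinearIndependent k (fun m : {m // MultLT h m} => zProd z (m.1.sort (WeakLT lt))) :=
  (linearIndependent_equiv (admEquiv lt h).symm).symm

theorem span_adm_eq :
    span k {x | ∃ V, Adm lt h V ∧ x = zProd z V} =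
      span k (Set.range fun m : {m // MultLT h m} => zProd z (m.1.sort (WeakLT lt))) := by
  congr 1
  ext x
  constructor
  · rintro ⟨V, hV, rfl⟩
    exact ⟨admEquiv lt h ⟨V, hV⟩, congrArg (zProd z) (sort_coe_of_pairwise (adm_iff.mp hV).1)⟩
  · rintro ⟨m, rfl⟩
    exact ⟨_, adm_sort m.2, rfl⟩

theorem admSpan_le_span_image (P : Multiset Ξ → Prop) :
    admSpan k z lt h P ≤ span k
      ((fun m : {m // MultLT h m} => zProd z (m.1.sort (WeakLT lt))) '' {m | P m.1}) := by
  refine span_mono ?_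
  rintro _ ⟨U, hU, hP, rfl⟩
  exact ⟨admEquiv lt h ⟨U, hU⟩, hP, congrArg (zProd z) (sort_coe_of_pairwise (adm_iff.mp hU).1)⟩

theorem exists_sub_smul_mem_span_image (hstr : ∀ W, Straightens k z d lt h W)
    (lt' : Ξ → Ξ → Prop) [IsStrictTotalOrder Ξ lt'] (m : {m // MultLT h m}) :
    ∃ c : k, c ≠ 0 ∧ zProd z (m.1.sort (WeakLT lt')) - c • zProd z (m.1.sort (WeakLT lt)) ∈
      span k ((fun m : {m // MultLT h m} => zProd z (m.1.sort (WeakLT lt))) ''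
        {j | DMLT d lt j.1 m.1}) := by
  obtain ⟨c, hc, hmem⟩ := hstr (m.1.sort (WeakLT lt'))
  have hm : ((m.1.sort (WeakLT lt') : List Ξ) : Multiset Ξ) = m.1 := Multiset.sort_eq _ _
  rw [hm] at hmem
  exact ⟨c, hc, admSpan_le_span_image (DMLT d lt · m.1) hmem⟩

end ChangeOfOrder

theorem change_of_order_general
    {k σ H : Type*} [Field k] [Nonempty σ] [DecidableEq σ] [Ring H] [Algebra k H]
    (𝒜 : (σ →₀ ℕ) → Submodule k H) (hH : IsConnGradedAlg (k := k) 𝒜)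
    {Ξ : Type*} (z : Ξ → H) (d : Ξ → σ →₀ ℕ)
    (hz : ∀ ξ, z ξ ∈ 𝒜 (d ξ))
    (lt : Ξ → Ξ → Prop) (hlt : IsStrictTotalOrder Ξ lt)
    (h : Ξ → ℕ∞) (hh : ∀ ξ, 2 ≤ h ξ)
    (a : Ξ → Ξ → k)
    -- condition (a)
    (hpow : ∀ ξ : Ξ, ∀ m : ℕ, h ξ = (m : ℕ∞) → z ξ ^ m ∈ Hspan (k := k) z lt h ξ)
    -- condition (b)
    (hcomm : ∀ μ ν : Ξ, lt μ ν → a ν μ ≠ 0 ∧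
      z ν * z μ - a ν μ • (z μ * z ν) ∈ Hspan (k := k) z lt h ν)
    -- condition (c)
    (hwell : ∀ γ : σ →₀ ℕ, WellFounded (fun u v : {ξ : Ξ // d ξ = γ} => lt u.1 v.1)) :
    (LinearIndependent k (fun V : {V : List Ξ // Adm lt h V} => zProd z V.1) →
      ∀ lt' : Ξ → Ξ → Prop, IsStrictTotalOrder Ξ lt' →
        LinearIndependent k (fun V : {V : List Ξ // Adm lt' h V} => zProd z V.1)) ∧
    (Submodule.span k {x : H | ∃ V : List Ξ, Adm lt h V ∧ x = zProd z V} = ⊤ →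
      ∀ lt' : Ξ → Ξ → Prop, IsStrictTotalOrder Ξ lt' →
        Submodule.span k {x : H | ∃ V : List Ξ, Adm lt' h V ∧ x = zProd z V} = ⊤) := by
  have : SetLike.GradedMonoid 𝒜 :=
    { one_mem := hH.2.1, mul_mem := fun _ _ _ _ hx hy => hH.2.2.1 _ _ _ hx _ hy }
  have hwf := wellFounded_dmLT hwell
  have : IsStrictOrder {m // MultLT h m} (fun i j => DMLT d lt i.1 j.1) :=
    { irrefl := fun i => hwf.irrefl.irrefl i.1, trans := fun _ _ _ => TransGen.trans }
  have hstr := straightens_of_wellFounded hH.1 hz hcomm hpow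
    (fun ξ => (zero_lt_two.trans_le (hh ξ)).ne') hwell
  refine ⟨fun hli lt' hlt' => ?_, fun hsp lt' hlt' => ?_⟩ <;>
    choose c hc hv using exists_sub_smul_mem_span_image hstr lt'
  · rw [linearIndependent_adm_iff] at hli ⊢
    exact linearIndependent_of_sub_smul_mem_span hli hc hv
  · rw [span_adm_eq, eq_top_iff] at hsp ⊢
    exact hsp.trans (span_range_le_of_sub_smul_mem_span (InvImage.wf _ hwf) hc hv)

/-- **Proposition (change of order).** Under conditions (a)–(c) for the total order `◁`,
if the family `{z_V : V ∈ P(Ξ,◁,h)}` is linearly independent (resp. spans `H`), then for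
any total order `<` on `Ξ` the family `{z_V : V ∈ P(Ξ,<,h)}` is linearly independent
(resp. spans `H`). -/
theorem change_of_order
    {k σ H : Type*} [Field k] [Nonempty σ] [DecidableEq σ] [Ring H] [Algebra k H]
    (𝒜 : (σ →₀ ℕ) → Submodule k H) (hH : IsConnGradedAlg (k := k) 𝒜)
    {Ξ : Type*} (z : Ξ → H) (d : Ξ → σ →₀ ℕ)
    (hz : ∀ ξ, z ξ ∈ 𝒜 (d ξ)) (hd : ∀ ξ, d ξ ≠ 0)
    (lt : Ξ → Ξ → Prop) (hlt : IsStrictTotalOrder Ξ lt)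
    (h : Ξ → ℕ∞) (hh : ∀ ξ, 2 ≤ h ξ)
    (a : Ξ → Ξ → k)
    -- condition (a)
    (hpow : ∀ ξ : Ξ, ∀ m : ℕ, h ξ = (m : ℕ∞) → z ξ ^ m ∈ Hspan (k := k) z lt h ξ)
    -- condition (b)
    (hcomm : ∀ μ ν : Ξ, lt μ ν → a ν μ ≠ 0 ∧
      z ν * z μ - a ν μ • (z μ * z ν) ∈ Hspan (k := k) z lt h ν)
    -- condition (c)
    (hwell : ∀ γ : σ →₀ ℕ, WellFounded (fun u v : {ξ : Ξ // d ξ = γ} => lt u.1 v.1)) :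
    (LinearIndependent k (fun V : {V : List Ξ // Adm lt h V} => zProd z V.1) →
      ∀ lt' : Ξ → Ξ → Prop, IsStrictTotalOrder Ξ lt' →
        LinearIndependent k (fun V : {V : List Ξ // Adm lt' h V} => zProd z V.1)) ∧
    (Submodule.span k {x : H | ∃ V : List Ξ, Adm lt h V ∧ x = zProd z V} = ⊤ →
      ∀ lt' : Ξ → Ξ → Prop, IsStrictTotalOrder Ξ lt' →
        Submodule.span k {x : H | ∃ V : List Ξ, Adm lt' h V ∧ x = zProd z V} = ⊤) :=
  change_of_order_general 𝒜 hH z d hz lt hlt h hh a hpow hcomm hwell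

end AdamsPaper
end

section
/- For each γ ∈ Γ, the restriction of the pseudo-lexicographic order <_lex to the set {u ∈ ⟨X⟩ : deg(u) = γ} of words of degree γ is a well order. -/
/-!
Letters have nonzero degree, so among words of equal degree none is a proper prefix of another,
and there `<_lex` is the ordinary lexicographic order `List.Lex`. Its well-foundedness on words of
degree `γ` goes by induction on `γ` for the componentwise order of `σ →₀ ℕ`. Only the finitely
many degrees `δ ≤ γ` occur as degrees of first letters, and `<` is well-founded on each fibre, so
a nonempty set of such words has a `<`-minimal first letter `x`; the minimal word is `x` followed
by a minimal tail, which exists by induction since tails have degree `γ - deg x < γ`.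
-/

noncomputable section

namespace AdamsPaper

def wDeg {X σ : Type*} (dX : X → σ →₀ ℕ) (u : List X) : σ →₀ ℕ := (u.map dX).sum

/-- The pseudo-lexicographic order on words associated to a (strict) order on the
alphabet: `u <_lex v` iff `u = v ++ w` for some nonempty `w`, or `u = r ++ x :: s` and
`v = r ++ y :: t` with `x < y`. -/
def ltLex {X : Type*} (ltX : X → X → Prop) (u v : List X) : Prop :=
  (∃ w : List X, w ≠ [] ∧ u = v ++ w) ∨
    ∃ (r s t : List X) (x y : X), ltX x y ∧ u = r ++ x :: s ∧ v = r ++ y :: t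

theorem _root_.Set.wellFoundedOn_iff_exists_min {α : Type*} {r : α → α → Prop} {s : Set α} :
    s.WellFoundedOn r ↔ ∀ t ⊆ s, t.Nonempty → ∃ a ∈ t, ∀ b ∈ t, ¬ r b a := by
  constructor
  · intro h t hts ht
    obtain ⟨a, ha, hmin⟩ := (Set.wellFoundedOn_iff.1 h).has_min t ht
    exact ⟨a, ha, fun b hb hba => hmin b hb ⟨hba, hts hb, hts ha⟩⟩
  · intro h
    refine WellFounded.wellFounded_iff_has_min.2 fun T hT => ?_
    obtain ⟨_, ⟨a, haT, rfl⟩, hmin⟩ :=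
      h (Subtype.val '' T) (Set.image_subset_iff.2 fun b _ => b.2) (hT.image _)
    exact ⟨a, haT, fun b hbT hba => hmin b ⟨b, hbT, rfl⟩ hba⟩

theorem _root_.List.Lex.eq_append_or_exists_rel {α : Type*} {r : α → α → Prop} {u v : List α}
    (h : List.Lex r u v) :
    (∃ w, w ≠ [] ∧ v = u ++ w) ∨
      ∃ (p s t : List α) (x y : α), r x y ∧ u = p ++ x :: s ∧ v = p ++ y :: t := by
  induction h with
  | @nil a l => exact Or.inl ⟨a :: l, List.cons_ne_nil a l, rfl⟩
  | @cons a _ _ _ ih =>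
    rcases ih with ⟨w, hw, rfl⟩ | ⟨p, s, t, x, y, hxy, rfl, rfl⟩
    · exact Or.inl ⟨w, hw, rfl⟩
    · exact Or.inr ⟨a :: p, s, t, x, y, hxy, rfl, rfl⟩
  | @rel x s y t hxy => exact Or.inr ⟨[], s, t, x, y, hxy, rfl, rfl⟩

section Words

variable {σ X : Type*} {dX : X → σ →₀ ℕ} {r : X → X → Prop}

@[simp]
theorem wDeg_cons (x : X) (u : List X) : wDeg dX (x :: u) = dX x + wDeg dX u := by
  simp [wDeg]

@[simp]
theorem wDeg_append (u v : List X) : wDeg dX (u ++ v) = wDeg dX u + wDeg dX v := by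
  simp [wDeg]

theorem eq_nil_of_wDeg_eq_zero (hdX : ∀ x, dX x ≠ 0) {u : List X} (h : wDeg dX u = 0) :
    u = [] := by
  cases u with
  | nil => rfl
  | cons x u => exact absurd (add_eq_zero.1 ((wDeg_cons x u).symm.trans h)).1 (hdX x)

theorem ltLex_iff_lex_of_wDeg_eq (hdX : ∀ x, dX x ≠ 0) {u v : List X}
    (h : wDeg dX u = wDeg dX v) : ltLex r u v ↔ List.Lex r u v := by
  constructor
  · rintro (⟨w, hw, rfl⟩ | ⟨p, s, t, x, y, hxy, rfl, rfl⟩)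
    · rw [wDeg_append, add_eq_left] at h
      exact absurd (eq_nil_of_wDeg_eq_zero hdX h) hw
    · exact List.Lex.append_left r (List.Lex.rel hxy) p
  · intro hlex
    rcases hlex.eq_append_or_exists_rel with ⟨w, hw, rfl⟩ | hrel
    · rw [wDeg_append, left_eq_add] at h
      exact absurd (eq_nil_of_wDeg_eq_zero hdX h) hw
    · exact Or.inr hrel

theorem wellFoundedOn_setOf_le [IsStrictOrder X r] (hfib : ∀ δ, {x | dX x = δ}.WellFoundedOn r)
    (γ : σ →₀ ℕ) : {x | dX x ≤ γ}.WellFoundedOn r := by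
  classical
  have hunion : {x | dX x ≤ γ} = (Finset.Iic γ).sup fun δ => {x | dX x = δ} := by
    ext x
    simp [Finset.sup_set_eq_biUnion]
  rw [hunion, Finset.wellFoundedOn_sup]
  exact fun δ _ => hfib δ

theorem wellFoundedOn_lex_setOf_wDeg_eq [IsStrictOrder X r] (hdX : ∀ x, dX x ≠ 0)
    (hfib : ∀ δ, {x | dX x = δ}.WellFoundedOn r) (γ : σ →₀ ℕ) :
    {u | wDeg dX u = γ}.WellFoundedOn (List.Lex r) := by
  induction γ using WellFoundedLT.induction with
  | ind γ ih =>
  rw [Set.wellFoundedOn_iff_exists_min]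
  intro S hSγ hS
  by_cases hnil : [] ∈ S
  · exact ⟨[], hnil, fun u _ h => List.not_lex_nil h⟩
  have hheads : {x | ∃ u, x :: u ∈ S} ⊆ {x | dX x ≤ γ} := by
    rintro x ⟨u, hu⟩
    exact le_self_add.trans_eq ((wDeg_cons x u).symm.trans (hSγ hu))
  have hheads_ne : {x | ∃ u, x :: u ∈ S}.Nonempty := by
    obtain ⟨_ | ⟨x, u⟩, hu⟩ := hS
    exacts [absurd hu hnil, ⟨x, u, hu⟩]
  obtain ⟨x, ⟨u₀, hxu₀⟩, hxmin⟩ := Set.wellFoundedOn_iff_exists_min.1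
    (wellFoundedOn_setOf_le hfib γ) _ hheads hheads_ne
  have hγ : dX x + wDeg dX u₀ = γ := (wDeg_cons x u₀).symm.trans (hSγ hxu₀)
  have htails : {u | x :: u ∈ S} ⊆ {u | wDeg dX u = wDeg dX u₀} := fun u hu =>
    add_left_cancel (((wDeg_cons x u).symm.trans (hSγ hu)).trans hγ.symm)
  have hlt : wDeg dX u₀ < γ := hγ ▸ lt_add_of_pos_left _ (pos_iff_ne_zero.2 (hdX x))
  obtain ⟨m, hm, hmmin⟩ :=
    Set.wellFoundedOn_iff_exists_min.1 (ih _ hlt) _ htails ⟨u₀, hxu₀⟩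
  refine ⟨x :: m, hm, fun u hu hlex => ?_⟩
  cases u with
  | nil => exact hnil hu
  | cons y u =>
    cases hlex with
    | rel hyx => exact hxmin y ⟨u, hu⟩ hyx
    | cons hlex => exact hmmin u hu hlex

end Words

theorem ltLex_restriction_isWellOrder_general
    {σ X : Type*} (dX : X → σ →₀ ℕ) (hdX : ∀ x, dX x ≠ 0)
    (ltX : X → X → Prop) (hXtot : IsStrictTotalOrder X ltX)
    -- ... and restricts to a well order on each fiber of `deg`
    (hfib : ∀ γ : σ →₀ ℕ, WellFounded (fun a b : {x : X // dX x = γ} => ltX a.1 b.1)) :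
    ∀ γ : σ →₀ ℕ,
      IsWellOrder {u : List X // wDeg dX u = γ}
        (fun a b => ltLex ltX a.1 b.1) := by
  intro γ
  have hrel : (fun a b : {u : List X // wDeg dX u = γ} => ltLex ltX a.1 b.1) =
      Subrel (List.Lex ltX) (fun u => wDeg dX u = γ) := by
    funext a b
    exact propext (ltLex_iff_lex_of_wDeg_eq hdX (a.2.trans b.2.symm))
  rw [hrel]
  have := hXtot
  exact { wf := wellFoundedOn_lex_setOf_wDeg_eq hdX hfib γ, toTrichotomous := inferInstance }

/-- **Lemma.** Let `Γ = σ →₀ ℕ` be a free abelian monoid, `X` an alphabet of elements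
of nonzero degree, `<_Γ` a well order on `Γ` compatible with addition, and `<` the well
order on `X` comparing first degrees via `<_Γ` and then within each fiber by a chosen
well order.  Then for each `γ ∈ Γ` the restriction of the pseudo-lexicographic order
`<_lex` to the set of words of degree `γ` is a well order. -/
theorem ltLex_restriction_isWellOrder
    {σ X : Type*} [Nonempty σ] (dX : X → σ →₀ ℕ) (hdX : ∀ x, dX x ≠ 0)
    (ltG : (σ →₀ ℕ) → (σ →₀ ℕ) → Prop) (hGtot : IsStrictTotalOrder (σ →₀ ℕ) ltG)
    (hGwf : WellFounded ltG)
    (hGadd : ∀ γ γ₁ γ₂ : σ →₀ ℕ, ltG γ₁ γ₂ → ltG (γ + γ₁) (γ + γ₂))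
    (ltX : X → X → Prop) (hXtot : IsStrictTotalOrder X ltX)
    -- `<` on `X` refines the degree order `<_Γ` ...
    (hcomp : ∀ x₁ x₂ : X, ltG (dX x₁) (dX x₂) → ltX x₁ x₂)
    -- ... and restricts to a well order on each fiber of `deg`
    (hfib : ∀ γ : σ →₀ ℕ, WellFounded (fun a b : {x : X // dX x = γ} => ltX a.1 b.1)) :
    ∀ γ : σ →₀ ℕ,
      IsWellOrder {u : List X // wDeg dX u = γ}
        (fun a b => ltLex ltX a.1 b.1) :=
  ltLex_restriction_isWellOrder_general dX hdX ltX hXtot hfib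

end AdamsPaper

end
end

section
/- The map φ: (𝔖, ≺) → (⟨ℭ⟩, ≺_lex), sending each permutation to the word of connected permutations appearing in its unique factorization with respect to ×, is an isomorphism of totally ordered sets, where ⟨ℭ⟩ carries the pseudo-lexicographic order ≺_lex associated to the restriction of ≺ to ℭ. -/
noncomputable section

namespace AdamsPaper

/-- The order `≺` on permutations: the pseudo-lexicographic order on one-line notation
words over `ℤ₊ = {1 < 2 < 3 < ⋯}`. -/
def permLt (u v : List ℕ) : Prop := ltLex (· < ·) u v

/-- `u` is (the one-line notation of) a permutation of `{1, …, m}`, `m = u.length`. -/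
def IsPermWord (u : List ℕ) : Prop :=
  u.Nodup ∧ ∀ i ∈ u, 1 ≤ i ∧ i ≤ u.length

/-- The product `σ × τ` of permutations in one-line notation. -/
def mulX (u v : List ℕ) : List ℕ := u ++ v.map (· + u.length)

/-- The permutation `σ₁ × ⋯ × σ_r` associated to a word `(σ₁, …, σ_r)` on the alphabet
of permutations. -/
def prodX (L : List (List ℕ)) : List ℕ := L.foldr mulX []

/-- `u` is a connected permutation: a nonempty permutation word preserving no proper
initial segment `{1, …, i}`, `1 ≤ i ≤ m − 1`. -/
def IsConnectedPerm (u : List ℕ) : Prop :=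
  IsPermWord u ∧ u ≠ [] ∧ ∀ i : ℕ, 1 ≤ i → i < u.length → ¬ (∀ x ∈ u.take i, x ≤ i)

/-!
A permutation that is not connected fixes some `{1, …, i}` with `0 < i < m` and so splits as
`σ × τ` with shorter factors; recursing gives a factorization. It is unique because a nonempty
permutation that is a prefix of a connected permutation is all of it, so two connected prefixes
of the same word coincide. The same fact shows that for connected `σ ≺ τ` the word `σ` cannot
extend `τ`, so the two differ at some position, which stays visible in `σ × v` and `τ × w`:
thus `ψ` is strictly monotone, and a strictly monotone map from a total order into an
asymmetric relation reflects the order.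
-/

lemma length_mulX (u v : List ℕ) : (mulX u v).length = u.length + v.length := by
  simp [mulX]

lemma nil_mulX (v : List ℕ) : mulX [] v = v := by
  simp [mulX]

lemma mulX_assoc (u v w : List ℕ) : mulX (mulX u v) w = mulX u (mulX v w) := by
  simp only [mulX, List.map_append, List.map_map, List.append_assoc, List.length_append,
    List.length_map]
  congr 2
  exact List.map_congr_left fun _ _ => by simp only [Function.comp_apply]; omega

lemma prodX_cons (u : List ℕ) (L : List (List ℕ)) : prodX (u :: L) = mulX u (prodX L) := rfl

lemma prodX_append (L M : List (List ℕ)) : prodX (L ++ M) = mulX (prodX L) (prodX M) := by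
  induction L with
  | nil => exact (nil_mulX _).symm
  | cons a L ih => rw [List.cons_append, prodX_cons, prodX_cons, ih, mulX_assoc]

lemma prodX_eq_nil_iff {L : List (List ℕ)} : prodX L = [] ↔ ∀ τ ∈ L, τ = [] := by
  induction L with
  | nil => simp [prodX]
  | cons a L ih => simp [prodX_cons, mulX, ih]

namespace IsPermWord

variable {u v : List ℕ}

lemma toFinset_eq (hu : IsPermWord u) : u.toFinset = Finset.Icc 1 u.length := by
  refine Finset.eq_of_subset_of_card_le (fun x hx => ?_) ?_
  · exact Finset.mem_Icc.2 (hu.2 x (List.mem_toFinset.1 hx))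
  · rw [List.toFinset_card_of_nodup hu.1, Nat.card_Icc]
    omega

lemma mem_iff (hu : IsPermWord u) {x : ℕ} : x ∈ u ↔ 1 ≤ x ∧ x ≤ u.length := by
  rw [← List.mem_toFinset, hu.toFinset_eq, Finset.mem_Icc]

lemma exists_mulX_eq_of_take_le (hu : IsPermWord u) {i : ℕ} (hi : i ≤ u.length)
    (hcl : ∀ x ∈ u.take i, x ≤ i) :
    ∃ v, IsPermWord (u.take i) ∧ IsPermWord v ∧ mulX (u.take i) v = u := by
  have hlen : (u.take i).length = i := List.length_take_of_le hi
  have hσ : IsPermWord (u.take i) :=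
    ⟨(List.take_sublist _ _).nodup hu.1, fun x hx =>
      ⟨(hu.2 x (List.mem_of_mem_take hx)).1, by rw [hlen]; exact hcl x hx⟩⟩
  have hgt : ∀ x ∈ u.drop i, i < x := by
    intro x hx
    by_contra! hle
    have hx' : x ∈ u.take i :=
      hσ.mem_iff.2 ⟨(hu.2 x (List.mem_of_mem_drop hx)).1, by rw [hlen]; exact hle⟩
    exact List.disjoint_take_drop hu.1 le_rfl hx' hx
  refine ⟨(u.drop i).map (· - i), hσ, ⟨?_, fun x hx => ?_⟩, ?_⟩
  · refine ((List.drop_sublist _ _).nodup hu.1).map_on fun x hx y hy hxy => ?_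
    have := hgt x hx
    have := hgt y hy
    omega
  · obtain ⟨y, hy, rfl⟩ := List.mem_map.1 hx
    have := hgt y hy
    have := (hu.2 y (List.mem_of_mem_drop hy)).2
    simp only [List.length_map, List.length_drop]
    omega
  · rw [mulX, List.map_map, hlen]
    conv_rhs => rw [← List.take_append_drop i u]
    congr 1
    refine (List.map_congr_left fun x hx => ?_).trans (List.map_id _)
    have := hgt x hx
    simp only [Function.comp_apply, id_eq]
    omega

end IsPermWord

namespace IsConnectedPerm

variable {σ τ : List ℕ}

lemma eq_of_prefix (hσ : IsConnectedPerm σ) (hτ : IsPermWord τ) (hτ_ne : τ ≠ []) (h : τ <+: σ) :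
    τ = σ := by
  refine h.eq_of_length (le_antisymm h.length_le (not_lt.1 fun hlt => ?_))
  refine hσ.2.2 τ.length (List.length_pos_iff.2 hτ_ne) hlt fun x hx => ?_
  rw [List.prefix_iff_eq_take.1 h] at hτ
  exact (hτ.2 x hx).2.trans (by rw [List.length_take_of_le hlt.le])

lemma mulX_inj (hσ : IsConnectedPerm σ) (hτ : IsConnectedPerm τ) {v w : List ℕ}
    (h : mulX σ v = mulX τ w) : σ = τ ∧ v = w := by
  have hστ : σ = τ := by
    have hσw : σ <+: mulX τ w := h ▸ List.prefix_append σ _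
    rcases List.prefix_or_prefix_of_prefix hσw (List.prefix_append τ _) with hp | hp
    · exact hτ.eq_of_prefix hσ.1 hσ.2.1 hp
    · exact (hσ.eq_of_prefix hτ.1 hτ.2.1 hp).symm
  subst hστ
  exact ⟨rfl, List.map_injective_iff.2 (add_left_injective _) (List.append_cancel_left h)⟩

end IsConnectedPerm

lemma eq_of_prodX_eq {L M : List (List ℕ)} (hL : ∀ τ ∈ L, IsConnectedPerm τ)
    (hM : ∀ τ ∈ M, IsConnectedPerm τ) (h : prodX L = prodX M) : L = M := by
  induction L generalizing M with
  | nil =>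
    cases M with
    | nil => rfl
    | cons τ M => exact absurd (prodX_eq_nil_iff.1 h.symm τ (by simp)) (hM τ (by simp)).2.1
  | cons σ L ih =>
    cases M with
    | nil => exact absurd (prodX_eq_nil_iff.1 h σ (by simp)) (hL σ (by simp)).2.1
    | cons τ M =>
      obtain ⟨rfl, hLM⟩ := (hL σ (by simp)).mulX_inj (hM τ (by simp)) h
      rw [ih (fun ρ hρ => hL ρ (by simp [hρ])) (fun ρ hρ => hM ρ (by simp [hρ])) hLM]

lemma exists_prodX_eq {u : List ℕ} (hu : IsPermWord u) :
    ∃ L : List (List ℕ), (∀ τ ∈ L, IsConnectedPerm τ) ∧ prodX L = u := by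
  induction hn : u.length using Nat.strong_induction_on generalizing u with
  | _ n ih =>
    rcases eq_or_ne u [] with rfl | hne
    · exact ⟨[], by simp, rfl⟩
    by_cases hconn : IsConnectedPerm u
    · exact ⟨[u], by simpa using hconn, by simp [prodX, mulX]⟩
    obtain ⟨i, hi1, hilt, hcl⟩ : ∃ i, 1 ≤ i ∧ i < u.length ∧ ∀ x ∈ u.take i, x ≤ i := by
      simpa [IsConnectedPerm, hu, hne] using hconn
    obtain ⟨v, hσ, hv, huv⟩ := hu.exists_mulX_eq_of_take_le hilt.le hcl
    have hlen : i + v.length = u.length := by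
      rw [← huv, length_mulX, List.length_take_of_le hilt.le]
    obtain ⟨L, hL, hLσ⟩ := ih i (by omega) hσ (List.length_take_of_le hilt.le)
    obtain ⟨M, hM, hMv⟩ := ih v.length (by omega) hv rfl
    refine ⟨L ++ M, fun τ hτ => ?_, by rw [prodX_append, hLσ, hMv, huv]⟩
    rcases List.mem_append.1 hτ with hτ | hτ
    exacts [hL τ hτ, hM τ hτ]

section ltLex

variable {X Y : Type*} {ltX : X → X → Prop}

lemma not_ltLex_nil_left (v : List X) : ¬ ltLex ltX [] v := by
  rintro (⟨w, hw, h⟩ | ⟨r, s, t, x, y, -, h, -⟩)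
  · exact hw (List.append_eq_nil_iff.1 h.symm).2
  · simp at h

lemma ltLex_nil_right {v : List X} (h : v ≠ []) : ltLex ltX v [] :=
  Or.inl ⟨v, h, rfl⟩

lemma ltLex_cons_cons_iff {a b : X} {u v : List X} :
    ltLex ltX (a :: u) (b :: v) ↔ ltX a b ∨ (a = b ∧ ltLex ltX u v) := by
  constructor
  · rintro (⟨w, hw, h⟩ | ⟨_ | ⟨c, r⟩, s, t, x, y, hxy, hu, hv⟩)
    · obtain ⟨rfl, rfl⟩ := List.cons_eq_cons.1 h
      exact Or.inr ⟨rfl, Or.inl ⟨w, hw, rfl⟩⟩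
    · obtain ⟨rfl, rfl⟩ := List.cons_eq_cons.1 hu
      obtain ⟨rfl, rfl⟩ := List.cons_eq_cons.1 hv
      exact Or.inl hxy
    · obtain ⟨rfl, rfl⟩ := List.cons_eq_cons.1 hu
      obtain ⟨rfl, rfl⟩ := List.cons_eq_cons.1 hv
      exact Or.inr ⟨rfl, Or.inr ⟨r, s, t, x, y, hxy, rfl, rfl⟩⟩
  · rintro (h | ⟨rfl, ⟨w, hw, rfl⟩ | ⟨r, s, t, x, y, hxy, rfl, rfl⟩⟩)
    · exact Or.inr ⟨[], u, v, a, b, h, rfl, rfl⟩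
    · exact Or.inl ⟨w, hw, rfl⟩
    · exact Or.inr ⟨a :: r, s, t, x, y, hxy, rfl, rfl⟩

lemma ltLex_asymm (h : ∀ x y : X, ltX x y → ¬ ltX y x) {u v : List X} (huv : ltLex ltX u v) :
    ¬ ltLex ltX v u := by
  induction u generalizing v with
  | nil => exact absurd huv (not_ltLex_nil_left v)
  | cons a u ih =>
    cases v with
    | nil => exact not_ltLex_nil_left _
    | cons b v =>
      rw [ltLex_cons_cons_iff] at huv ⊢
      rintro (hba | ⟨rfl, hvu⟩)
      · rcases huv with hab | ⟨rfl, -⟩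
        exacts [h _ _ hab hba, h _ _ hba hba]
      · rcases huv with hbb | ⟨-, huv⟩
        exacts [h _ _ hbb hbb, ih huv hvu]

lemma ltLex_or_ltLex_of_ne (h : ∀ x y : X, x ≠ y → ltX x y ∨ ltX y x) {u v : List X}
    (huv : u ≠ v) : ltLex ltX u v ∨ ltLex ltX v u := by
  induction u generalizing v with
  | nil => exact Or.inr (ltLex_nil_right (Ne.symm huv))
  | cons a u ih =>
    cases v with
    | nil => exact Or.inl (ltLex_nil_right (List.cons_ne_nil a u))
    | cons b v =>
      simp only [ltLex_cons_cons_iff]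
      rcases eq_or_ne a b with rfl | hab
      · rcases ih (v := v) (fun h' => huv (h' ▸ rfl)) with h' | h'
        exacts [Or.inl (Or.inr ⟨rfl, h'⟩), Or.inr (Or.inr ⟨rfl, h'⟩)]
      · exact (h a b hab).imp Or.inl Or.inl

lemma ltLex_append_left (p : List X) {u v : List X} (h : ltLex ltX u v) :
    ltLex ltX (p ++ u) (p ++ v) := by
  rcases h with ⟨w, hw, rfl⟩ | ⟨r, s, t, x, y, hxy, rfl, rfl⟩
  · exact Or.inl ⟨w, hw, by simp⟩
  · exact Or.inr ⟨p ++ r, s, t, x, y, hxy, by simp, by simp⟩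

lemma ltLex_map {ltY : Y → Y → Prop} {f : X → Y} (hf : ∀ x y, ltX x y → ltY (f x) (f y))
    {u v : List X} (h : ltLex ltX u v) : ltLex ltY (u.map f) (v.map f) := by
  rcases h with ⟨w, hw, rfl⟩ | ⟨r, s, t, x, y, hxy, rfl, rfl⟩
  · exact Or.inl ⟨w.map f, by simpa using hw, List.map_append ..⟩
  · exact Or.inr ⟨r.map f, s.map f, t.map f, f x, f y, hf x y hxy, by simp, by simp⟩

end ltLex

lemma permLt_asymm {u v : List ℕ} (h : permLt u v) : ¬ permLt v u :=
  ltLex_asymm (fun _ _ => Nat.lt_asymm) h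

lemma permLt_or_permLt_of_ne {u v : List ℕ} (h : u ≠ v) : permLt u v ∨ permLt v u :=
  ltLex_or_ltLex_of_ne (fun _ _ h => h.lt_or_gt) h

lemma permLt_mulX_mulX {σ τ : List ℕ} (hσ : IsConnectedPerm σ) (hτ : IsPermWord τ)
    (hτ_ne : τ ≠ []) (h : permLt σ τ) (v w : List ℕ) : permLt (mulX σ v) (mulX τ w) := by
  rcases h with ⟨s, hs, rfl⟩ | ⟨r, s, t, x, y, hxy, rfl, rfl⟩
  · have hτσ := hσ.eq_of_prefix hτ hτ_ne (List.prefix_append τ s)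
    exact absurd (List.append_right_eq_self.1 hτσ.symm) hs
  · exact Or.inr ⟨r, s ++ v.map (· + (r ++ x :: s).length), t ++ w.map (· + (r ++ y :: t).length),
      x, y, hxy, by simp [mulX], by simp [mulX]⟩

lemma permLt_prodX_of_ltLex {L M : List (List ℕ)} (hL : ∀ τ ∈ L, IsConnectedPerm τ)
    (hM : ∀ τ ∈ M, IsConnectedPerm τ) (h : ltLex permLt L M) :
    permLt (prodX L) (prodX M) := by
  rcases h with ⟨N, hN, rfl⟩ | ⟨R, S, T, σ, τ, hστ, rfl, rfl⟩
  · obtain ⟨τ, hτ⟩ := List.exists_mem_of_ne_nil N hN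
    have hN_ne : prodX N ≠ [] := fun h' =>
      (hL τ (by simp [hτ])).2.1 (prodX_eq_nil_iff.1 h' τ hτ)
    exact Or.inl ⟨_, by simpa using hN_ne, prodX_append M N⟩
  · have hτ := hM τ (by simp)
    simp only [prodX_append, prodX_cons, mulX]
    exact ltLex_append_left _ (ltLex_map (fun _ _ h => by omega)
      (permLt_mulX_mulX (hL σ (by simp)) hτ.1 hτ.2.1 hστ _ _))

/-- **Lemma.** The map `φ : (𝔖, ≺) → (⟨ℭ⟩, ≺_lex)`, sending a permutation to the word
of connected permutations of its unique `×`-factorization, is an isomorphism of totally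
ordered sets; here `⟨ℭ⟩` carries the pseudo-lexicographic order associated to the
restriction of `≺` to the connected permutations.  Concretely: every permutation
factors uniquely into connected permutations, and for words `L, M` of connected
permutations, `L ≺_lex M` iff `ψ(L) ≺ ψ(M)`. -/
theorem phi_orderIso :
    (∀ u : List ℕ, IsPermWord u →
      ∃! L : List (List ℕ), (∀ τ ∈ L, IsConnectedPerm τ) ∧ prodX L = u) ∧
    (∀ L M : List (List ℕ), (∀ τ ∈ L, IsConnectedPerm τ) →
      (∀ τ ∈ M, IsConnectedPerm τ) →
      (ltLex permLt L M ↔ permLt (prodX L) (prodX M))) := by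
  refine ⟨fun u hu => ?_, fun L M hL hM => ⟨permLt_prodX_of_ltLex hL hM, fun h => ?_⟩⟩
  · obtain ⟨L, hL, rfl⟩ := exists_prodX_eq hu
    exact ⟨L, ⟨hL, rfl⟩, fun M ⟨hM, hML⟩ => eq_of_prodX_eq hM hL hML⟩
  · rcases eq_or_ne L M with rfl | hne
    · exact absurd h (permLt_asymm h)
    exact (ltLex_or_ltLex_of_ne (fun _ _ => permLt_or_permLt_of_ne) hne).resolve_right
      fun hML => permLt_asymm (permLt_prodX_of_ltLex hM hL hML) h

end AdamsPaper

end
end
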